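/- For every λ ∈ ℂ \ [−1,1], |tan(πβ(λ)/2)| < 1. -/

import Mathlib

/-- `β(λ) = (1/(2πi))·Log((λ+1)/(λ−1))`, with the principal branch of `Log`. -/
noncomputable def betaFn (lam : ℂ) : ℂ :=
  (1 / (2 * (Real.pi : ℂ) * Complex.I)) * Complex.log ((lam + 1) / (lam - 1))

/-!
With `w = (λ + 1)/(λ - 1)` and `z = πβ(λ)/2` we have `e^{2iz} = exp (Log w / 2)`, a square root
of `w`, while `tan z = i (1 - e^{2iz}) / (1 + e^{2iz})`. The Möbius map `λ ↦ w` sends `[-1, 1]`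
onto `(-∞, 0]`, so for `λ ∉ [-1, 1]` the square root lies in the open right half-plane, hence
strictly closer to `1` than to `-1`.
-/

open Real

namespace Complex

lemma norm_sub_one_lt_norm_add_one {s : ℂ} (hs : 0 < s.re) : ‖s - 1‖ < ‖s + 1‖ := by
  rw [← sq_lt_sq₀ (norm_nonneg _) (norm_nonneg _), ← normSq_eq_norm_sq, ← normSq_eq_norm_sq,
    normSq_apply, normSq_apply]
  simp only [sub_re, add_re, sub_im, add_im, one_re, one_im]
  nlinarith

/-- No hypothesis is needed: where `cos z = 0`, both sides take the junk value `0`. -/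
lemma tan_eq_one_sub_exp_mul_I_div (z : ℂ) :
    tan z = (1 - exp (2 * z * I)) * I / (1 + exp (2 * z * I)) := by
  have hexp : exp (2 * z * I) = exp (z * I) * exp (z * I) := by
    rw [← exp_add]; ring_nf
  have hinv : exp (-z * I) * exp (z * I) = 1 := by rw [← exp_add]; simp
  have hsin : sin z * (2 * exp (z * I)) = (1 - exp (2 * z * I)) * I := by
    rw [sin, hexp]; linear_combination I * hinv
  have hcos : cos z * (2 * exp (z * I)) = 1 + exp (2 * z * I) := by
    rw [cos, hexp]; linear_combination hinv
  rw [tan_eq_sin_div_cos, ← mul_div_mul_right _ _ (mul_ne_zero two_ne_zero (exp_ne_zero _)),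
    hsin, hcos]

lemma norm_tan_lt_one_of_re_exp_pos {z : ℂ} (h : 0 < (exp (2 * z * I)).re) : ‖tan z‖ < 1 := by
  have hden : 0 < ‖1 + exp (2 * z * I)‖ := by
    refine norm_pos_iff.2 fun h0 => ?_
    rw [eq_neg_of_add_eq_zero_right h0] at h
    norm_num at h
  rw [tan_eq_one_sub_exp_mul_I_div, norm_div, norm_mul, norm_I, mul_one, div_lt_one hden,
    norm_sub_rev, add_comm]
  exact norm_sub_one_lt_norm_add_one h

lemma re_exp_log_div_two_pos {w : ℂ} (hw : w.arg ≠ π) : 0 < (exp (log w / 2)).re := by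
  have harg : -π < w.arg ∧ w.arg < π := ⟨neg_pi_lt_arg w, (arg_le_pi w).lt_of_ne hw⟩
  rw [exp_re, div_ofNat_im, log_im]
  exact mul_pos (Real.exp_pos _) (Real.cos_pos_of_mem_Ioo ⟨by linarith, by linarith⟩)

lemma add_one_div_sub_one_mem_slitPlane {lam : ℂ} (hlam : lam ∉ ofReal '' Set.Icc (-1) 1) :
    (lam + 1) / (lam - 1) ∈ slitPlane := by
  contrapose! hlam
  rw [mem_slitPlane_iff_not_le_zero, not_not, le_def, zero_re, zero_im] at hlam
  obtain ⟨ht, him⟩ := hlam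
  by_cases h1 : lam = 1
  · exact ⟨1, by norm_num, by simp [h1]⟩
  set t := ((lam + 1) / (lam - 1)).re
  have hw : (lam + 1) / (lam - 1) = t := ext rfl (by rw [ofReal_im, him])
  have ht1 : t - 1 < 0 := by linarith
  refine ⟨(t + 1) / (t - 1), ⟨?_, ?_⟩, ?_⟩
  · rw [le_div_iff_of_neg ht1]; linarith
  · rw [div_le_iff_of_neg ht1]; linarith
  -- `λ ↦ (λ + 1) / (λ - 1)` is an involution away from `λ = 1`
  · have ht1' : (t : ℂ) - 1 ≠ 0 := by exact_mod_cast ht1.ne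
    have hsub : lam - 1 ≠ 0 := sub_ne_zero.2 h1
    push_cast
    rw [← hw] at ht1' ⊢
    field_simp
    ring

end Complex

lemma two_mul_pi_mul_betaFn_div_two_mul_I (lam : ℂ) :
    2 * (π * betaFn lam / 2) * Complex.I = Complex.log ((lam + 1) / (lam - 1)) / 2 := by
  have hπ : (π : ℂ) ≠ 0 := Complex.ofReal_ne_zero.2 pi_ne_zero
  rw [betaFn]
  field_simp

/-- `|tan(πβ(λ)/2)| < 1` for every `λ ∈ ℂ \ [−1,1]`. -/
theorem tan_beta_lt_one (lam : ℂ)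
    (hlam : lam ∉ (Complex.ofReal '' Set.Icc (-1 : ℝ) 1)) :
    ‖Complex.tan ((Real.pi : ℂ) * betaFn lam / 2)‖ < 1 := by
  apply Complex.norm_tan_lt_one_of_re_exp_pos
  rw [two_mul_pi_mul_betaFn_div_two_mul_I]
  exact Complex.re_exp_log_div_two_pos
    (Complex.mem_slitPlane_iff_arg.1 (Complex.add_one_div_sub_one_mem_slitPlane hlam)).1
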